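/- arXiv:1807.03183 — 6 statements merged into one kernel-verified Lean document; each statement's English description precedes it below -/
import Mathlib

section
/- Let α > 0, let U be an open subset of the upper half-plane Π⁺ = {z ∈ ℂ : Im z > 0}, and let f : ℂ → ℂ be complex differentiable (analytic) on U. If z₀ ∈ U is a local minimum (relative to U) of the function z ↦ (Im z)^{α/2}·|f(z)|, then f(z₀) = 0. -/
open Complex

/-!
Suppose `f z₀ ≠ 0` and put `y₀ = Im z₀`. The identity
`|w - z̄₀|² = 4 y₀ Im w + |w - z₀|²` shows that the holomorphic function
`ψ w = (w - z̄₀)^α` satisfies `(4 y₀)^(α/2) (Im w)^(α/2) ≤ |ψ w|`, with equality exactly at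
`w = z₀`. Hence `|ψ f|` has a local minimum at `z₀`, where it does not vanish, so `ψ f` is
locally constant by the minimum modulus principle; at any nearby `w ≠ z₀` this contradicts the
strict inequality.
-/

open Filter Topology ComplexConjugate

theorem eq_zero_of_isLocalMin_mul_norm {φ : ℂ → ℝ} {ψ f : ℂ → ℂ} {z₀ : ℂ}
    (hψ : ∀ᶠ w in 𝓝 z₀, DifferentiableAt ℂ ψ w) (hf : ∀ᶠ w in 𝓝 z₀, DifferentiableAt ℂ f w)
    (hψ₀ : ψ z₀ ≠ 0) (heq : φ z₀ = ‖ψ z₀‖) (hlt : ∀ᶠ w in 𝓝[≠] z₀, φ w < ‖ψ w‖)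
    (hmin : IsLocalMin (fun w => φ w * ‖f w‖) z₀) : f z₀ = 0 := by
  by_contra hf₀
  set h : ℂ → ℂ := fun w => ψ w * f w
  have hh₀ : 0 < ‖h z₀‖ := norm_pos_iff.mpr (mul_ne_zero hψ₀ hf₀)
  have hle : ∀ᶠ w in 𝓝 z₀, φ w * ‖f w‖ ≤ ‖h w‖ := by
    filter_upwards [eventually_nhdsWithin_iff.mp hlt] with w hw
    rcases eq_or_ne w z₀ with rfl | hne
    · simp [h, heq]
    · simpa [h] using mul_le_mul_of_nonneg_right (hw hne).le (norm_nonneg (f w))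
  have hmin_h : IsLocalMin (norm ∘ h) z₀ := by
    filter_upwards [hmin, hle] with w hw hw'
    calc ‖h z₀‖ = φ z₀ * ‖f z₀‖ := by simp [h, heq]
      _ ≤ ‖h w‖ := hw.trans hw'
  have hdiff : ∀ᶠ w in 𝓝 z₀, DifferentiableAt ℂ h w := by
    filter_upwards [hψ, hf] with w hψw hfw using hψw.mul hfw
  have hconst := (eventually_eq_or_eq_zero_of_isLocalMin_norm hdiff hmin_h).resolve_right
    (norm_pos_iff.mp hh₀)
  obtain ⟨w, ⟨hw_eq, hw_min⟩, hw_lt⟩ :=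
    (((hconst.and hmin).filter_mono nhdsWithin_le_nhds).and hlt).exists
  have hfw : 0 < ‖f w‖ := by
    refine norm_pos_iff.mpr fun hfw => hh₀.ne ?_
    simp [← hw_eq, h, hfw]
  refine lt_irrefl (φ w * ‖f w‖) ?_
  calc φ w * ‖f w‖ < ‖ψ w‖ * ‖f w‖ := mul_lt_mul_of_pos_right hw_lt hfw
    _ = φ z₀ * ‖f z₀‖ := by rw [← norm_mul, heq, ← norm_mul]; exact congrArg norm hw_eq
    _ ≤ φ w * ‖f w‖ := hw_min

theorem sq_norm_sub_conj (z w : ℂ) :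
    ‖w - conj z‖ ^ 2 = 4 * z.im * w.im + ‖w - z‖ ^ 2 := by
  simp only [Complex.sq_norm, normSq_apply, sub_re, sub_im, conj_re, conj_im]
  ring

theorem norm_sub_conj_rpow (z w : ℂ) (α : ℝ) :
    ‖w - conj z‖ ^ α = (4 * z.im * w.im + ‖w - z‖ ^ 2) ^ (α / 2) := by
  rw [← sq_norm_sub_conj, ← Real.rpow_natCast, ← Real.rpow_mul (norm_nonneg _)]
  ring_nf

theorem rpow_mul_im_rpow_lt_norm_sub_conj_rpow {z w : ℂ} {α : ℝ} (hz : 0 ≤ z.im)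
    (hw : 0 ≤ w.im) (hwz : w ≠ z) (hα : 0 < α) :
    (4 * z.im) ^ (α / 2) * w.im ^ (α / 2) < ‖w - conj z‖ ^ α := by
  have hwz' : 0 < ‖w - z‖ := norm_pos_iff.mpr (sub_ne_zero.mpr hwz)
  rw [norm_sub_conj_rpow, ← Real.mul_rpow (by positivity) hw]
  exact Real.rpow_lt_rpow (by positivity) (by nlinarith) (by positivity)

theorem rpow_mul_im_rpow_eq_norm_self_sub_conj_rpow {z : ℂ} (hz : 0 ≤ z.im) (α : ℝ) :
    (4 * z.im) ^ (α / 2) * z.im ^ (α / 2) = ‖z - conj z‖ ^ α := by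
  rw [norm_sub_conj_rpow, sub_self, norm_zero, ← Real.mul_rpow (by positivity) hz]
  norm_num

theorem differentiableAt_sub_conj_cpow {z w : ℂ} (hz : 0 ≤ z.im) (hw : 0 < w.im) (c : ℂ) :
    DifferentiableAt ℂ (fun u => (u - conj z) ^ c) w := by
  have hslit : w - conj z ∈ slitPlane := by
    refine mem_slitPlane_iff.mpr (Or.inr ?_)
    simp only [sub_im, conj_im]
    linarith
  exact (((hasDerivAt_id w).sub_const _).cpow_const hslit).differentiableAt

/-- Every local minimum (relative to an open subset `U` of the upper half-plane) of
`z ↦ (Im z)^(α/2) * |f z|`, with `f` analytic on `U`, is a zero of `f`. -/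
theorem local_min_of_weighted_modulus_is_zero
    (α : ℝ) (hα : 0 < α)
    (U : Set ℂ) (hU : IsOpen U) (hUsub : U ⊆ {z : ℂ | 0 < z.im})
    (f : ℂ → ℂ) (hf : DifferentiableOn ℂ f U)
    (z₀ : ℂ) (hz₀ : z₀ ∈ U)
    (hmin : IsLocalMinOn (fun z : ℂ => z.im ^ (α / 2) * ‖f z‖) U z₀) :
    f z₀ = 0 := by
  have hU₀ : U ∈ 𝓝 z₀ := hU.mem_nhds hz₀
  have hy₀ : 0 < z₀.im := hUsub hz₀
  set C := (4 * z₀.im) ^ (α / 2)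
  have hψ₀ : 0 < ‖(z₀ - conj z₀) ^ (α : ℂ)‖ := by
    rw [norm_cpow_real, ← rpow_mul_im_rpow_eq_norm_self_sub_conj_rpow hy₀.le]
    positivity
  refine eq_zero_of_isLocalMin_mul_norm (φ := fun w => C * w.im ^ (α / 2))
    (ψ := fun w => (w - conj z₀) ^ (α : ℂ)) ?_ ?_ (norm_pos_iff.mp hψ₀) ?_ ?_ ?_
  · filter_upwards [hU₀] with w hw using differentiableAt_sub_conj_cpow hy₀.le (hUsub hw) _
  · filter_upwards [hU₀] with w hw using hf.differentiableAt (hU.mem_nhds hw)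
  · rw [norm_cpow_real, rpow_mul_im_rpow_eq_norm_self_sub_conj_rpow hy₀.le]
  · filter_upwards [nhdsWithin_le_nhds hU₀, self_mem_nhdsWithin] with w hw hne
    rw [norm_cpow_real]
    exact rpow_mul_im_rpow_lt_norm_sub_conj_rpow hy₀.le (hUsub hw).le hne hα
  · filter_upwards [hmin.isLocalMin hU₀] with w hw
    rw [mul_assoc, mul_assoc]
    gcongr
end

section
/- Let Ψ(x) = (1/√(2π))·∫_x^∞ e^{−t²/2} dt. For any a > 0, m > 0, and k > 0, the function h(x) = x^k·Ψ(a·x^m) is monotonically decreasing on the set of x > 0 with x^m ≥ k√(2π)/(2am); that is, if 0 < x₁ ≤ x₂ and x₁^m ≥ k√(2π)/(2am), then h(x₂) ≤ h(x₁). -/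
/-!
Write `F(u) = ∫_u^∞ e^{-t²/2} dt` and `u = a x^m`. The derivative of `x^k F(a x^m)` is
`x^{k-1} (k F(u) - a m x^m e^{-u²/2})`. Since `(s + u)² ≥ s² + u²` for `s, u ≥ 0`, shifting the
variable of integration gives `F(u) ≤ F(0) e^{-u²/2} = (√(2π)/2) e^{-u²/2}`, so the derivative is
nonpositive as soon as `a m x^m ≥ k √(2π)/2`, a condition that persists as `x` grows.
-/

open Real MeasureTheory Set

theorem hasDerivAt_integral_Ioi {E : Type*} [NormedAddCommGroup E] [NormedSpace ℝ E]
    [CompleteSpace E] {f : ℝ → E} (hf : Integrable f) {u : ℝ} (hu : ContinuousAt f u) :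
    HasDerivAt (fun v => ∫ t in Ioi v, f t) (-f u) u := by
  have hsplit : (fun v => ∫ t in Ioi v, f t) =
      fun v => (∫ t in Ioi 0, f t) - ∫ t in (0:ℝ)..v, f t :=
    funext fun v =>
      eq_sub_of_add_eq' (intervalIntegral.integral_interval_add_Ioi hf.integrableOn hf.integrableOn)
  rw [hsplit]
  exact (intervalIntegral.integral_hasDerivAt_right hf.intervalIntegrable
    hf.aestronglyMeasurable.stronglyMeasurableAtFilter hu).const_sub _

noncomputable def gaussTail (u : ℝ) : ℝ := ∫ t in Ioi u, exp (-t ^ 2 / 2)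

theorem integrable_exp_neg_sq_div_two : Integrable fun t : ℝ => exp (-t ^ 2 / 2) := by
  simpa [neg_div, div_eq_inv_mul] using integrable_exp_neg_mul_sq (by norm_num : (0:ℝ) < 1 / 2)

theorem hasDerivAt_gaussTail (u : ℝ) : HasDerivAt gaussTail (-exp (-u ^ 2 / 2)) u :=
  hasDerivAt_integral_Ioi integrable_exp_neg_sq_div_two (by fun_prop)

theorem gaussTail_zero : gaussTail 0 = √(2 * π) / 2 := by
  rw [gaussTail]
  convert integral_gaussian_Ioi (1 / 2) using 3 <;> ring_nf

theorem gaussTail_eq_integral_Ioi_zero (u : ℝ) :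
    gaussTail u = ∫ s in Ioi 0, exp (-(s + u) ^ 2 / 2) := by
  have := (measurePreserving_add_right volume u).setIntegral_preimage_emb
    (measurableEmbedding_addRight u) (fun t => exp (-t ^ 2 / 2)) (Ioi u)
  simpa [gaussTail] using this.symm

theorem gaussTail_le {u : ℝ} (hu : 0 ≤ u) : gaussTail u ≤ √(2 * π) / 2 * exp (-u ^ 2 / 2) := by
  have hint := integrable_exp_neg_sq_div_two
  calc gaussTail u = ∫ s in Ioi 0, exp (-(s + u) ^ 2 / 2) := gaussTail_eq_integral_Ioi_zero u
    _ ≤ ∫ s in Ioi 0, exp (-u ^ 2 / 2) * exp (-s ^ 2 / 2) := by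
      refine setIntegral_mono_on ((hint.comp_add_right u).integrableOn)
        (hint.const_mul _).integrableOn measurableSet_Ioi fun s (hs : 0 < s) => ?_
      rw [← exp_add]
      exact exp_le_exp.2 (by nlinarith)
    _ = √(2 * π) / 2 * exp (-u ^ 2 / 2) := by
      rw [integral_const_mul, ← gaussTail, gaussTail_zero, mul_comm]

theorem hasDerivAt_rpow_mul_gaussTail (a m k : ℝ) {x : ℝ} (hx : 0 < x) :
    HasDerivAt (fun x => x ^ k * gaussTail (a * x ^ m))
      (x ^ (k - 1) * (k * gaussTail (a * x ^ m) - a * m * x ^ m * exp (-(a * x ^ m) ^ 2 / 2)))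
      x := by
  have hpow : ∀ r : ℝ, HasDerivAt (fun x : ℝ => x ^ r) (r * x ^ (r - 1)) x := fun r =>
    hasDerivAt_rpow_const (Or.inl hx.ne')
  refine ((hpow k).mul ((hasDerivAt_gaussTail _).comp x ((hpow m).const_mul a))).congr_deriv ?_
  rw [Function.comp_apply, rpow_sub_one hx.ne', rpow_sub_one hx.ne']
  field_simp
  ring

theorem antitoneOn_rpow_mul_gaussTail {a m k x₀ : ℝ} (ha : 0 < a) (hm : 0 < m) (hk : 0 ≤ k)
    (hx₀ : 0 < x₀) (hthr : k * √(2 * π) / (2 * a * m) ≤ x₀ ^ m) :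
    AntitoneOn (fun x => x ^ k * gaussTail (a * x ^ m)) (Ici x₀) := by
  have hderiv : ∀ x ∈ Ici x₀, HasDerivAt (fun x => x ^ k * gaussTail (a * x ^ m)) _ x :=
    fun x hx => hasDerivAt_rpow_mul_gaussTail a m k (hx₀.trans_le hx)
  refine antitoneOn_of_hasDerivWithinAt_nonpos (convex_Ici x₀)
    (fun x hx => (hderiv x hx).continuousAt.continuousWithinAt)
    (fun x hx => (hderiv x (interior_subset hx)).hasDerivWithinAt) fun x hx => ?_
  rw [interior_Ici] at hx
  have hxpos : 0 < x := hx₀.trans hx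
  have hxm : k * √(2 * π) / 2 ≤ a * m * x ^ m := by
    have := hthr.trans (rpow_le_rpow hx₀.le hx.le hm.le)
    rw [div_le_iff₀ (by positivity)] at this
    linarith
  have hcmp : k * gaussTail (a * x ^ m) ≤ a * m * x ^ m * exp (-(a * x ^ m) ^ 2 / 2) :=
    calc k * gaussTail (a * x ^ m) ≤ k * (√(2 * π) / 2 * exp (-(a * x ^ m) ^ 2 / 2)) := by
          gcongr; exact gaussTail_le (by positivity)
      _ ≤ a * m * x ^ m * exp (-(a * x ^ m) ^ 2 / 2) := by
          rw [← mul_assoc, mul_div_assoc']; gcongr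
  exact mul_nonpos_of_nonneg_of_nonpos (by positivity) (sub_nonpos.2 hcmp)

/-- For `Ψ(x) = (1/√(2π)) ∫_x^∞ e^{-t²/2} dt` and `a, m, k > 0`, the function
`h(x) = x^k · Ψ(a·x^m)` is monotonically decreasing for `x > 0` with
`x^m ≥ k√(2π)/(2am)`. -/
theorem gaussian_tail_monotone
    (a m k : ℝ) (ha : 0 < a) (hm : 0 < m) (hk : 0 < k)
    (x₁ x₂ : ℝ) (hx₁ : 0 < x₁) (h12 : x₁ ≤ x₂)
    (hthr : k * Real.sqrt (2 * Real.pi) / (2 * a * m) ≤ x₁ ^ m) :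
    x₂ ^ k * ((1 / Real.sqrt (2 * Real.pi)) * ∫ t in Set.Ioi (a * x₂ ^ m), Real.exp (-t ^ 2 / 2))
      ≤ x₁ ^ k * ((1 / Real.sqrt (2 * Real.pi)) * ∫ t in Set.Ioi (a * x₁ ^ m), Real.exp (-t ^ 2 / 2)) := by
  rw [mul_left_comm, mul_left_comm (x₁ ^ k)]
  exact mul_le_mul_of_nonneg_left
    (antitoneOn_rpow_mul_gaussTail ha hm hk.le hx₁ hthr self_mem_Ici h12 h12) (by positivity)
end

section
/- Let α > 1 and let s ∈ L²(ℝ, ℂ). Then the function F(z) = ∫_ℝ s(t)·(i(t−z))^{−(α+1)/2} dt, where the complex power is the principal branch, is well defined and complex differentiable at every point z of the upper half-plane Π⁺ = {z ∈ ℂ : Im z > 0}; in particular F is analytic on Π⁺. -/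
/-!
For `Im w > 0` the kernel `t ↦ (i(t - w))^r` has modulus `|t - w|^r`, which lies in `L²(ℝ)` as soon
as `r < -1/2`; Cauchy–Schwarz then makes `s(t)(i(t - w))^r` integrable. Differentiating under the
integral sign lowers the exponent to `r - 1`, and on the disc `|w - z| ≤ Im z / 2` one has
`|t - w| ≥ |t - z| / 2`, so the `w`-derivative is dominated by a constant times
`|s(t)| |t - z|^(r - 1)`, integrable by the same argument.
-/

open Complex MeasureTheory

lemma re_I_mul_ofReal_sub (t : ℝ) (w : ℂ) : (I * (t - w)).re = w.im := by
  simp [mul_re]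

lemma I_mul_ofReal_sub_mem_slitPlane {w : ℂ} (hw : 0 < w.im) (t : ℝ) : I * (t - w) ∈ slitPlane :=
  mem_slitPlane_iff.2 <| Or.inl <| (re_I_mul_ofReal_sub t w).symm ▸ hw

lemma im_le_norm_ofReal_sub (t : ℝ) (w : ℂ) : w.im ≤ ‖(t : ℂ) - w‖ := by
  simpa using neg_le_of_abs_le (abs_im_le_norm ((t : ℂ) - w))

lemma norm_I_mul_ofReal_sub_cpow {w : ℂ} (hw : 0 < w.im) (t r : ℝ) :
    ‖(I * (t - w)) ^ (r : ℂ)‖ = ‖(t : ℂ) - w‖ ^ r := by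
  have h0 : I * (t - w) ≠ 0 := slitPlane_ne_zero (I_mul_ofReal_sub_mem_slitPlane hw t)
  simp [norm_cpow_of_ne_zero h0]

lemma continuous_I_mul_ofReal_sub_cpow {w : ℂ} (hw : 0 < w.im) (e : ℂ) :
    Continuous fun t : ℝ => (I * (t - w)) ^ e :=
  continuous_iff_continuousAt.2 fun t =>
    (continuous_const.mul (continuous_ofReal.sub continuous_const)).continuousAt.cpow
      continuousAt_const (I_mul_ofReal_sub_mem_slitPlane hw t)

lemma hasDerivAt_I_mul_ofReal_sub_cpow {w : ℂ} (hw : 0 < w.im) (t r : ℝ) :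
    HasDerivAt (fun w : ℂ => (I * (t - w)) ^ (r : ℂ))
      (-I * r * (I * (t - w)) ^ ((r - 1 : ℝ) : ℂ)) w := by
  have h : HasDerivAt (fun w : ℂ => I * (t - w)) (-I) w := by
    simpa using ((hasDerivAt_id w).const_sub (t : ℂ)).const_mul I
  convert h.cpow_const (c := (r : ℂ)) (I_mul_ofReal_sub_mem_slitPlane hw t) using 1
  push_cast
  ring

lemma mul_one_add_abs_le_norm_ofReal_sub (t : ℝ) (w : ℂ) :
    min 1 w.im / 2 * (1 + |t - w.re|) ≤ ‖(t : ℂ) - w‖ := by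
  have him := im_le_norm_ofReal_sub t w
  have hre : |t - w.re| ≤ ‖(t : ℂ) - w‖ := by simpa using abs_re_le_norm ((t : ℂ) - w)
  have h1 : min 1 w.im ≤ 1 := min_le_left _ _
  have h2 : min 1 w.im ≤ w.im := min_le_right _ _
  nlinarith [abs_nonneg (t - w.re)]

lemma integrable_norm_ofReal_sub_rpow {w : ℂ} (hw : 0 < w.im) {r : ℝ} (hr : r < -1) :
    Integrable fun t : ℝ => ‖(t : ℂ) - w‖ ^ r := by
  set m := min 1 w.im / 2
  have hm : 0 < m := by positivity
  have hdom : Integrable fun t : ℝ => m ^ r * (1 + ‖t - w.re‖) ^ r := by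
    have h := integrable_one_add_norm (E := ℝ) (μ := volume) (r := -r) (by simp; linarith)
    simpa using (h.comp_sub_right w.re).const_mul (m ^ r)
  have hcont : Continuous fun t : ℝ => ‖(t : ℂ) - w‖ ^ r :=
    (continuous_ofReal.sub continuous_const).norm.rpow_const fun t =>
      Or.inl (hw.trans_le (im_le_norm_ofReal_sub t w)).ne'
  refine hdom.mono' hcont.aestronglyMeasurable (Filter.Eventually.of_forall fun t => ?_)
  rw [Real.norm_of_nonneg (by positivity), Real.norm_eq_abs,
    ← Real.mul_rpow hm.le (by positivity)]
  exact Real.rpow_le_rpow_of_nonpos (by positivity) (mul_one_add_abs_le_norm_ofReal_sub t w)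
    (by linarith)

lemma memLp_two_I_mul_ofReal_sub_cpow {w : ℂ} (hw : 0 < w.im) {r : ℝ} (hr : r < -1 / 2) :
    MemLp (fun t : ℝ => (I * (t - w)) ^ (r : ℂ)) 2 volume := by
  have hmeas := (continuous_I_mul_ofReal_sub_cpow hw (r : ℂ)).aestronglyMeasurable (μ := volume)
  rw [memLp_two_iff_integrable_sq_norm hmeas]
  refine (integrable_norm_ofReal_sub_rpow hw (r := 2 * r) (by linarith)).congr
    (Filter.Eventually.of_forall fun t => ?_)
  simp only [norm_I_mul_ofReal_sub_cpow hw, mul_comm (2 : ℝ), Real.rpow_mul (norm_nonneg _)]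
  norm_cast

lemma integrable_mul_I_mul_ofReal_sub_cpow {s : ℝ → ℂ} (hs : MemLp s 2 volume) {w : ℂ}
    (hw : 0 < w.im) {r : ℝ} (hr : r < -1 / 2) :
    Integrable fun t : ℝ => s t * (I * (t - w)) ^ (r : ℂ) :=
  hs.integrable_mul (memLp_two_I_mul_ofReal_sub_cpow hw hr)

lemma im_sub_norm_sub_le_im (z w : ℂ) : z.im - ‖w - z‖ ≤ w.im := by
  linarith [neg_le_of_abs_le (abs_im_le_norm (w - z)), sub_im w z]

lemma norm_I_mul_ofReal_sub_cpow_le {z w : ℂ} (hz : 0 < z.im) (hw : ‖w - z‖ ≤ z.im / 2)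
    (t : ℝ) {r : ℝ} (hr : r ≤ 0) :
    ‖(I * (t - w)) ^ (r : ℂ)‖ ≤ 2 ^ (-r) * ‖(I * (t - z)) ^ (r : ℂ)‖ := by
  have hz_le := im_le_norm_ofReal_sub t z
  have hw_im : 0 < w.im := by linarith [im_sub_norm_sub_le_im z w]
  have half_le : ‖(t : ℂ) - z‖ / 2 ≤ ‖(t : ℂ) - w‖ := by
    linarith [norm_sub_le_norm_sub_add_norm_sub (t : ℂ) w z]
  rw [norm_I_mul_ofReal_sub_cpow hw_im, norm_I_mul_ofReal_sub_cpow hz]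
  calc ‖(t : ℂ) - w‖ ^ r ≤ (‖(t : ℂ) - z‖ / 2) ^ r :=
        Real.rpow_le_rpow_of_nonpos (by linarith) half_le hr
    _ = 2 ^ (-r) * ‖(t : ℂ) - z‖ ^ r := by
        rw [Real.div_rpow (norm_nonneg _) zero_le_two, Real.rpow_neg zero_le_two, div_eq_inv_mul]

theorem differentiableAt_integral_mul_I_mul_ofReal_sub_cpow {s : ℝ → ℂ}
    (hs : MemLp s 2 volume) {z : ℂ} (hz : 0 < z.im) {r : ℝ} (hr : r < -1 / 2) :
    DifferentiableAt ℂ (fun w : ℂ => ∫ t : ℝ, s t * (I * (t - w)) ^ (r : ℂ)) z := by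
  have hball : Metric.ball z (z.im / 2) ∈ nhds z := Metric.ball_mem_nhds z (by linarith)
  have him : ∀ w ∈ Metric.ball z (z.im / 2), 0 < w.im := fun w hw => by
    linarith [im_sub_norm_sub_le_im z w, mem_ball_iff_norm.1 hw]
  refine (hasDerivAt_integral_of_dominated_loc_of_deriv_le hball
    (Filter.eventually_of_mem hball fun w hw => ?meas)
    (integrable_mul_I_mul_ofReal_sub_cpow hs hz hr)
    (F' := fun w t => s t * (-I * r * (I * (t - w)) ^ ((r - 1 : ℝ) : ℂ)))
    (bound := fun t => ‖-I * r‖ * 2 ^ (1 - r) * ‖s t * (I * (t - z)) ^ ((r - 1 : ℝ) : ℂ)‖)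
    ?meas' (Filter.Eventually.of_forall fun t w hw => ?bound)
    ((integrable_mul_I_mul_ofReal_sub_cpow hs hz (by linarith)).norm.const_mul _)
    (Filter.Eventually.of_forall fun t w hw =>
      (hasDerivAt_I_mul_ofReal_sub_cpow (him w hw) t r).const_mul (s t))).2.differentiableAt
  case meas =>
    exact hs.aestronglyMeasurable.mul
      (continuous_I_mul_ofReal_sub_cpow (him w hw) _).aestronglyMeasurable
  case meas' =>
    exact hs.aestronglyMeasurable.mul
      ((continuous_I_mul_ofReal_sub_cpow hz _).const_smul (-I * r)).aestronglyMeasurable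
  case bound =>
    have hw' : ‖w - z‖ ≤ z.im / 2 := (mem_ball_iff_norm.1 hw).le
    have h := norm_I_mul_ofReal_sub_cpow_le hz hw' t (r := r - 1) (by linarith)
    rw [neg_sub] at h
    calc ‖s t * (-I * r * (I * (t - w)) ^ ((r - 1 : ℝ) : ℂ))‖
        = ‖-I * r‖ * (‖s t‖ * ‖(I * (t - w)) ^ ((r - 1 : ℝ) : ℂ)‖) := by
          rw [norm_mul, norm_mul]; ring
      _ ≤ ‖-I * r‖ * (‖s t‖ * (2 ^ (1 - r) * ‖(I * (t - z)) ^ ((r - 1 : ℝ) : ℂ)‖)) := by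
          gcongr
      _ = ‖-I * r‖ * 2 ^ (1 - r) * ‖s t * (I * (t - z)) ^ ((r - 1 : ℝ) : ℂ)‖ := by
          rw [norm_mul (s t)]; ring

/-- Analyticity-inducing property of the Cauchy wavelet transform: for `α > 1` and
`s ∈ L²(ℝ)`, the function `F(z) = ∫_ℝ s(t)·(i(t-z))^{-(α+1)/2} dt` is well defined
(the integrand is integrable) and complex differentiable at every point of the
upper half-plane. -/
theorem cauchy_wavelet_transform_analytic
    (α : ℝ) (hα : 1 < α) (s : ℝ → ℂ) (hs : MeasureTheory.MemLp s 2 MeasureTheory.volume) :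
    ∀ z : ℂ, 0 < z.im →
      (MeasureTheory.Integrable
          (fun t : ℝ => s t * (Complex.I * ((t : ℂ) - z)) ^ (-(((α : ℂ) + 1) / 2)))) ∧
      DifferentiableAt ℂ
        (fun w : ℂ => ∫ t : ℝ, s t * (Complex.I * ((t : ℂ) - w)) ^ (-(((α : ℂ) + 1) / 2))) z := by
  intro z hz
  have hexp : -(((α : ℂ) + 1) / 2) = ((-((α + 1) / 2) : ℝ) : ℂ) := by push_cast; ring
  have hr : -((α + 1) / 2) < -1 / 2 := by linarith
  rw [hexp]
  exact ⟨integrable_mul_I_mul_ofReal_sub_cpow hs hz hr,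
    differentiableAt_integral_mul_I_mul_ofReal_sub_cpow hs hz hr⟩
end

section
/- Let α > 1 and y, v > 0. Then ∫_0^∞ ξ^{α−1}·( y^{(α+1)/2}·e^{−yξ} − v^{(α+1)/2}·e^{−vξ} )² dξ ≤ Γ(α)·( y^{(α+1)/2} − v^{(α+1)/2} )² / (y+v)^α. -/
/-!
Expanding the square turns the integral into three Gamma integrals,
`Γ(α) (A² / (2y)^α - 2AB / (y+v)^α + B² / (2v)^α)` with `A = y^((α+1)/2)`, `B = v^((α+1)/2)`.
The cross term already has the denominator `(y+v)^α` of the bound, and the two diagonal terms add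
up to `Γ(α) (y+v) / 2^α`, which Jensen's inequality for `t ↦ t^(α+1)` at the midpoint of `y, v`
bounds by `Γ(α) (A² + B²) / (y+v)^α`.
-/

open Real MeasureTheory Set

section GammaIntegral

variable {α : ℝ}

lemma integrableOn_rpow_mul_exp_neg_mul_Ioi (hα : 0 < α) {s : ℝ} (hs : 0 < s) :
    IntegrableOn (fun ξ : ℝ => ξ ^ (α - 1) * exp (-s * ξ)) (Ioi 0) := by
  simpa using integrableOn_rpow_mul_exp_neg_mul_rpow (by linarith : -1 < α - 1) one_pos hs

lemma integral_rpow_mul_exp_neg_mul_Ioi_eq_div (hα : 0 < α) {s : ℝ} (hs : 0 < s) :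
    ∫ ξ in Ioi 0, ξ ^ (α - 1) * exp (-s * ξ) = Gamma α / s ^ α := by
  simp_rw [neg_mul, integral_rpow_mul_exp_neg_mul_Ioi hα hs, one_div, inv_rpow hs.le]
  ring

theorem integral_rpow_mul_sub_mul_exp_sq (hα : 0 < α) (a b : ℝ) {y v : ℝ} (hy : 0 < y)
    (hv : 0 < v) :
    ∫ ξ in Ioi 0, ξ ^ (α - 1) * (a * exp (-y * ξ) - b * exp (-v * ξ)) ^ 2 =
      Gamma α * (a ^ 2 / (2 * y) ^ α - 2 * a * b / (y + v) ^ α + b ^ 2 / (2 * v) ^ α) := by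
  set g : ℝ → ℝ → ℝ := fun s ξ => ξ ^ (α - 1) * exp (-s * ξ)
  have hg : ∀ {s}, 0 < s → IntegrableOn (g s) (Ioi 0) :=
    integrableOn_rpow_mul_exp_neg_mul_Ioi hα
  have hexp : ∀ s t ξ : ℝ, exp (-s * ξ) * exp (-t * ξ) = exp (-(s + t) * ξ) := fun s t ξ => by
    rw [← exp_add]; ring_nf
  have hexpand : ∀ ξ, ξ ^ (α - 1) * (a * exp (-y * ξ) - b * exp (-v * ξ)) ^ 2 =
      a ^ 2 * g (2 * y) ξ - 2 * a * b * g (y + v) ξ + b ^ 2 * g (2 * v) ξ := fun ξ => by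
    simp only [g, two_mul, ← hexp]
    ring
  simp_rw [hexpand]
  have h2y := (hg (by positivity : 0 < 2 * y)).const_mul (a ^ 2)
  have hyv := (hg (by positivity : 0 < y + v)).const_mul (2 * a * b)
  have h2v := (hg (by positivity : 0 < 2 * v)).const_mul (b ^ 2)
  rw [integral_add (by exact h2y.sub hyv) h2v, integral_sub h2y hyv]
  simp only [integral_const_mul, g,
    integral_rpow_mul_exp_neg_mul_Ioi_eq_div hα (by positivity : 0 < 2 * y),
    integral_rpow_mul_exp_neg_mul_Ioi_eq_div hα (by positivity : 0 < y + v),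
    integral_rpow_mul_exp_neg_mul_Ioi_eq_div hα (by positivity : 0 < 2 * v)]
  ring

end GammaIntegral

section Jensen

variable {p y v : ℝ}

lemma rpow_add_one_div_two_mul_rpow (hy : 0 < y) : y ^ (p + 1) / (2 * y) ^ p = y / 2 ^ p := by
  rw [rpow_add_one hy.ne', mul_rpow zero_le_two hy.le]
  field_simp

lemma add_div_two_rpow_le (hp : 1 ≤ p) (hy : 0 ≤ y) (hv : 0 ≤ v) :
    ((y + v) / 2) ^ p ≤ (y ^ p + v ^ p) / 2 := by
  have := (convexOn_rpow hp).2 (mem_Ici.2 hy) (mem_Ici.2 hv)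
    (by norm_num : (0 : ℝ) ≤ 1 / 2) (by norm_num : (0 : ℝ) ≤ 1 / 2) (by norm_num)
  simp only [smul_eq_mul] at this
  ring_nf at this ⊢
  exact this

lemma rpow_add_one_div_two_mul_rpow_add_le (hp : 0 ≤ p) (hy : 0 < y) (hv : 0 < v) :
    y ^ (p + 1) / (2 * y) ^ p + v ^ (p + 1) / (2 * v) ^ p ≤
      (y ^ (p + 1) + v ^ (p + 1)) / (y + v) ^ p := by
  rw [rpow_add_one_div_two_mul_rpow hy, rpow_add_one_div_two_mul_rpow hv, ← add_div,
    div_le_div_iff₀ (by positivity) (by positivity)]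
  have hjensen := add_div_two_rpow_le (by linarith : 1 ≤ p + 1) hy.le hv.le
  rw [div_rpow (by positivity) zero_le_two, rpow_add_one (add_pos hy hv).ne',
    rpow_add_one two_ne_zero, div_le_div_iff₀ (by positivity) two_pos] at hjensen
  linarith

end Jensen

lemma rpow_div_two_sq {y : ℝ} (hy : 0 ≤ y) (s : ℝ) : (y ^ (s / 2)) ^ 2 = y ^ s := by
  rw [← rpow_mul_natCast hy]
  norm_num

/-- Bound on the `real part' term via Jensen's inequality:
`∫_0^∞ ξ^{α-1}·(y^{(α+1)/2}e^{-yξ} - v^{(α+1)/2}e^{-vξ})² dξ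
  ≤ Γ(α)·(y^{(α+1)/2} - v^{(α+1)/2})²/(y+v)^α`. -/
theorem real_part_bound (α y v : ℝ) (hα : 1 < α) (hy : 0 < y) (hv : 0 < v) :
    (∫ ξ in Set.Ioi (0 : ℝ),
        ξ ^ (α - 1) *
          (y ^ ((α + 1) / 2) * Real.exp (-y * ξ) - v ^ ((α + 1) / 2) * Real.exp (-v * ξ)) ^ 2)
      ≤ Real.Gamma α * (y ^ ((α + 1) / 2) - v ^ ((α + 1) / 2)) ^ 2 / (y + v) ^ α := by
  have hα₀ : 0 < α := by linarith
  have hjensen := rpow_add_one_div_two_mul_rpow_add_le hα₀.le hy hv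
  rw [integral_rpow_mul_sub_mul_exp_sq hα₀ _ _ hy hv, mul_div_assoc (Gamma α), sub_sq,
    rpow_div_two_sq hy.le, rpow_div_two_sq hv.le]
  refine mul_le_mul_of_nonneg_left ?_ (Gamma_pos_of_pos hα₀).le
  linear_combination hjensen
end

section
/- Let α > 1. For s ∈ (0,1) define g̃(s) = ( s^α·(α(1−s) − s(1−s^α))² + (α·s^α·(1−s) − (1−s^α))² ) / (1−s^α)³ and G(s) = ( (α+1)·s^α·(1−s)² − (1−s^{α+1})² ) / ( s·(1−s^α)² ), where all powers of s are real powers. Then for all 0 < a ≤ b < 1, ∫_a^b r·g̃(1−r²)/(1−r²)² dr = (1/2)·( G(1−a²) − G(1−b²) ). -/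
/-!
Substituting `s = 1 - r²` turns `r dr` into `-ds / 2`, so the claim is the fundamental theorem
of calculus for `G' = g̃ / s²` on `(0, 1)`. That derivative identity is purely algebraic in `s`,
`t = s ^ α` and `α` (using `s ^ (α + 1) = s t`, `s ^ (α - 1) = t / s`), and holds wherever
`s > 0` and `t ≠ 1`.
-/

open Real intervalIntegral

/-- The numerically stable form of the pair correlation function of the zero set of the
hyperbolic GAF with parameter `α`, as a function of `s = 1 - r²`. -/
noncomputable def gafPairCorr (α s : ℝ) : ℝ :=
  (s ^ α * (α * (1 - s) - s * (1 - s ^ α)) ^ 2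
      + (α * s ^ α * (1 - s) - (1 - s ^ α)) ^ 2) / (1 - s ^ α) ^ 3

/-- The closed-form antiderivative arising in the exact computation of expected pair counts. -/
noncomputable def gafPairCorrAntideriv (α s : ℝ) : ℝ :=
  ((α + 1) * s ^ α * (1 - s) ^ 2 - (1 - s ^ (α + 1)) ^ 2) / (s * (1 - s ^ α) ^ 2)

section
variable {α s : ℝ}

theorem hasDerivAt_gafPairCorrAntideriv (hs : 0 < s) (hsα : s ^ α ≠ 1) :
    HasDerivAt (gafPairCorrAntideriv α) (gafPairCorr α s / s ^ 2) s := by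
  have hpow : HasDerivAt (fun x : ℝ => x ^ α) (α * s ^ (α - 1)) s :=
    hasDerivAt_rpow_const (Or.inl hs.ne')
  have hpow_succ : HasDerivAt (fun x : ℝ => x ^ (α + 1)) ((α + 1) * s ^ α) s := by
    simpa using hasDerivAt_rpow_const (x := s) (p := α + 1) (Or.inl hs.ne')
  have hnum := ((hpow.const_mul (α + 1)).fun_mul
    (((hasDerivAt_id' s).const_sub 1).fun_pow 2)).fun_sub ((hpow_succ.const_sub 1).fun_pow 2)
  have hden := (hasDerivAt_id' s).fun_mul ((hpow.const_sub 1).fun_pow 2)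
  have hsα' : 1 - s ^ α ≠ 0 := sub_ne_zero.2 hsα.symm
  refine (hnum.fun_div hden (by positivity)).congr_deriv ?_
  rw [gafPairCorr, rpow_add hs, rpow_sub hs, rpow_one]
  field_simp
  ring

theorem continuousAt_gafPairCorr (hs : 0 < s) (hsα : s ^ α ≠ 1) :
    ContinuousAt (gafPairCorr α) s := by
  have hsα' : (1 - s ^ α) ^ 3 ≠ 0 := pow_ne_zero 3 (sub_ne_zero.2 hsα.symm)
  unfold gafPairCorr
  fun_prop (disch := first | exact hsα' | exact Or.inl hs.ne')

end

theorem integral_mul_comp_one_sub_sq {F f : ℝ → ℝ} {a b : ℝ} (ha : 0 < a) (hab : a ≤ b)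
    (hb : b < 1) (hF : ∀ s ∈ Set.Ioo 0 1, HasDerivAt F (f s) s)
    (hf : ContinuousOn f (Set.Ioo 0 1)) :
    ∫ r in a..b, r * f (1 - r ^ 2) = (1 / 2) * (F (1 - a ^ 2) - F (1 - b ^ 2)) := by
  have hmaps : Set.MapsTo (fun r : ℝ => 1 - r ^ 2) (Set.uIcc a b) (Set.Ioo 0 1) := by
    intro r hr
    rw [Set.uIcc_of_le hab] at hr
    constructor <;> nlinarith [hr.1, hr.2]
  have hderiv : ∀ r ∈ Set.uIcc a b,
      HasDerivAt (fun x => -(1 / 2) * F (1 - x ^ 2)) (r * f (1 - r ^ 2)) r := by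
    intro r hr
    have hinner : HasDerivAt (fun x : ℝ => 1 - x ^ 2) (-(2 * r)) r := by
      simpa using (hasDerivAt_pow 2 r).const_sub 1
    refine (((hF _ (hmaps hr)).comp r hinner).const_mul (-(1 / 2))).congr_deriv ?_
    ring
  have hcont : ContinuousOn (fun r => r * f (1 - r ^ 2)) (Set.uIcc a b) :=
    continuousOn_id.mul (hf.comp (by fun_prop) hmaps)
  rw [integral_eq_sub_of_hasDerivAt hderiv hcont.intervalIntegrable]
  ring

/-- Closed-form evaluation of the pair-count integral:
`∫_a^b r·g̃(1-r²)/(1-r²)² dr = (1/2)(G(1-a²) - G(1-b²))`. -/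
theorem pair_count_integral (α : ℝ) (hα : 1 < α) (a b : ℝ)
    (ha : 0 < a) (hab : a ≤ b) (hb : b < 1) :
    (∫ r in a..b, r * gafPairCorr α (1 - r ^ 2) / (1 - r ^ 2) ^ 2)
      = (1 / 2) * (gafPairCorrAntideriv α (1 - a ^ 2) - gafPairCorrAntideriv α (1 - b ^ 2)) := by
  have hsα : ∀ s ∈ Set.Ioo (0 : ℝ) 1, s ^ α ≠ 1 := fun s hs =>
    (rpow_lt_one hs.1.le hs.2 (by linarith)).ne
  simp_rw [mul_div_assoc]
  refine integral_mul_comp_one_sub_sq ha hab hb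
    (fun s hs => hasDerivAt_gafPairCorrAntideriv hs.1 (hsα s hs)) fun s hs => ?_
  exact ((continuousAt_gafPairCorr hs.1 (hsα s hs)).div (continuousAt_pow s 2)
    (pow_ne_zero 2 hs.1.ne')).continuousWithinAt
end

section
/- Let α > 1 and define G(s) = ( (α+1)·s^α·(1−s)² − (1−s^{α+1})² ) / ( s·(1−s^α)² ) for s ∈ (0,1), where all powers of s are real powers. Then G(s) tends to −(α+1)/α as s tends to 1 from the left. -/
open Real Filter Topology

theorem tendsto_one_sub_rpow_div_one_sub (β : ℝ) :
    Tendsto (fun s : ℝ => (1 - s ^ β) / (1 - s)) (𝓝[≠] 1) (𝓝 β) := by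
  have h := hasDerivAt_iff_tendsto_slope.mp (hasDerivAt_rpow_const (p := β) (Or.inl one_ne_zero))
  rw [one_rpow, mul_one] at h
  refine h.congr fun s => ?_
  rw [slope_def_field, one_rpow, ← neg_div_neg_eq, neg_sub, neg_sub]

theorem gafPairCorrAntideriv_eq {α s : ℝ} (hs : s ≠ 0) (hs₁ : 1 - s ≠ 0)
    (hsα : 1 - s ^ α ≠ 0) :
    gafPairCorrAntideriv α s =
      ((α + 1) * s ^ α * ((1 - s) / (1 - s ^ α)) ^ 2
        - ((1 - s ^ (α + 1)) / (1 - s) * ((1 - s) / (1 - s ^ α))) ^ 2) / s := by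
  unfold gafPairCorrAntideriv
  field_simp

theorem tendsto_gafPairCorrAntideriv_nhdsLT_one {α : ℝ} (hα : α ≠ 0) :
    Tendsto (gafPairCorrAntideriv α) (𝓝[<] 1) (𝓝 (-(α + 1) / α)) := by
  have hq (β : ℝ) : Tendsto (fun s : ℝ => (1 - s ^ β) / (1 - s)) (𝓝[<] 1) (𝓝 β) :=
    (tendsto_one_sub_rpow_div_one_sub β).mono_left (nhdsLT_le_nhdsNE 1)
  have hr : Tendsto (fun s : ℝ => (1 - s) / (1 - s ^ α)) (𝓝[<] 1) (𝓝 α⁻¹) := by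
    simpa only [inv_div] using (hq α).inv₀ hα
  have hs : Tendsto (fun s : ℝ => s) (𝓝[<] 1) (𝓝 1) :=
    tendsto_nhdsWithin_of_tendsto_nhds tendsto_id
  have hsα : Tendsto (fun s : ℝ => s ^ α) (𝓝[<] 1) (𝓝 1) := by
    simpa only [one_rpow] using hs.rpow_const (p := α) (Or.inl one_ne_zero)
  have hlim := (((tendsto_const_nhds (x := α + 1)).mul hsα).mul (hr.pow 2)).sub
    (((hq (α + 1)).mul hr).pow 2) |>.div hs one_ne_zero
  have hval : ((α + 1) * 1 * α⁻¹ ^ 2 - ((α + 1) * α⁻¹) ^ 2) / 1 = -(α + 1) / α := by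
    field_simp
    ring
  rw [hval] at hlim
  refine hlim.congr' ?_
  -- `1 - s ^ α ≠ 0` near `1⁻` because `(1 - s ^ α) / (1 - s) → α ≠ 0`.
  filter_upwards [Ioo_mem_nhdsLT (show (0 : ℝ) < 1 from one_pos),
    (hq α).eventually_ne hα] with s ⟨hs₀, hs₁⟩ hsα
  exact (gafPairCorrAntideriv_eq hs₀.ne' (sub_ne_zero.mpr hs₁.ne') (left_ne_zero_of_mul hsα)).symm

/-- `G(s) → -(α+1)/α` as `s → 1⁻`. -/
theorem gafPairCorrAntideriv_tendsto (α : ℝ) (hα : 1 < α) :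
    Filter.Tendsto (gafPairCorrAntideriv α) (nhdsWithin 1 (Set.Iio 1))
      (nhds (-(α + 1) / α)) :=
  tendsto_gafPairCorrAntideriv_nhdsLT_one (zero_lt_one.trans hα).ne'
end
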